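/- arXiv:1504.00382 — 3 statements merged into one kernel-verified Lean document; each statement's English description precedes it below -/
import Mathlib

section
/- Let u(t) = Σ_{k=1}^∞ 2^{-k} exp(i 2^k t) (the Weierstrass-type lacunary series). Then ω(h) = h·log(1/h) is a modulus of continuity for u: there exists a constant C > 0 such that |u(t+h) − u(t)| ≤ C·h·log(1/h) for all real t and all sufficiently small h > 0. -/
open scoped Real

/-- The Weierstrass-type lacunary series `u(t) = ∑_{k=1}^∞ 2^{-k} exp(i 2^k t)`. -/
noncomputable def weierstrassU (t : ℝ) : ℂ :=
  ∑' k : ℕ, (2 : ℂ) ^ (-((k : ℤ) + 1)) * Complex.exp (Complex.I * 2 ^ (k + 1) * (t : ℂ))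

/-!
The `k`-th term of `u` moves by at most `min (2^{-k}, h)` when `t` moves by `h`: it has modulus
`2^{-(k+1)}` and is `1`-Lipschitz. Summing, the `N` low frequencies contribute at most `N h` and
the tail at most `2 · 2^{-N}`; taking `N ≈ log₂ (1/h)` gives `O(h log (1/h))`.
-/

open Complex

theorem norm_exp_I_mul_ofReal_sub_exp_I_mul_ofReal_le (x y : ℝ) :
    ‖exp (I * x) - exp (I * y)‖ ≤ min 2 |x - y| := by
  refine le_min ?_ ?_
  · calc ‖exp (I * x) - exp (I * y)‖ ≤ ‖exp (I * x)‖ + ‖exp (I * y)‖ := norm_sub_le _ _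
      _ = 2 := by rw [norm_exp_I_mul_ofReal, norm_exp_I_mul_ofReal]; norm_num
  · have hfactor : exp (I * x) - exp (I * y) = exp (I * y) * (exp (I * ↑(x - y)) - 1) := by
      rw [mul_sub, mul_one, ← exp_add]; push_cast; ring_nf
    rw [hfactor, norm_mul, norm_exp_I_mul_ofReal, one_mul]
    exact Real.norm_exp_I_mul_ofReal_sub_one_le

theorem tsum_min_half_pow_le {b : ℝ} (hb : 0 ≤ b) (N : ℕ) :
    ∑' k : ℕ, min ((1 / 2 : ℝ) ^ k) b ≤ N * b + 2 * (1 / 2) ^ N := by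
  have hgeom : Summable fun k : ℕ => (1 / 2 : ℝ) ^ k := summable_geometric_two
  have hsum : Summable fun k : ℕ => min ((1 / 2 : ℝ) ^ k) b :=
    hgeom.of_nonneg_of_le (fun k => by positivity) fun k => min_le_left _ _
  rw [← hsum.sum_add_tsum_nat_add N]
  gcongr
  · calc ∑ k ∈ Finset.range N, min ((1 / 2 : ℝ) ^ k) b ≤ ∑ _k ∈ Finset.range N, b :=
          Finset.sum_le_sum fun k _ => min_le_right _ _
      _ = N * b := by simp
  · calc ∑' k, min ((1 / 2 : ℝ) ^ (k + N)) b ≤ ∑' k, (1 / 2 : ℝ) ^ k * (1 / 2) ^ N :=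
          ((summable_nat_add_iff N).mpr hsum).tsum_le_tsum
            (fun k => (min_le_left _ _).trans_eq (pow_add _ _ _)) (hgeom.mul_right _)
      _ = 2 * (1 / 2) ^ N := by rw [tsum_mul_right, tsum_geometric_two]

open Real in
theorem exists_half_pow_le_and_le_logb {h : ℝ} (h0 : 0 < h) (h1 : h ≤ 1) :
    ∃ N : ℕ, (1 / 2 : ℝ) ^ N ≤ h ∧ (N : ℝ) ≤ logb 2 (1 / h) + 1 := by
  have hlogb : 0 ≤ logb 2 (1 / h) := logb_nonneg one_lt_two (by rw [le_div_iff₀ h0]; simpa)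
  refine ⟨⌈logb 2 (1 / h)⌉₊, ?_, (Nat.ceil_lt_add_one hlogb).le⟩
  have hceil := (logb_le_iff_le_rpow one_lt_two (by positivity)).mp (Nat.le_ceil (logb 2 (1 / h)))
  rw [rpow_natCast, div_le_iff₀ h0] at hceil
  rw [div_pow, one_pow, div_le_iff₀ (by positivity)]
  linarith

noncomputable def weierstrassTerm (k : ℕ) (t : ℝ) : ℂ :=
  (2 : ℂ) ^ (-((k : ℤ) + 1)) * exp (I * 2 ^ (k + 1) * (t : ℂ))

theorem weierstrassTerm_eq_inv_mul_exp (k : ℕ) (t : ℝ) :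
    weierstrassTerm k t = ((2 : ℂ) ^ (k + 1))⁻¹ * exp (I * ↑((2 : ℝ) ^ (k + 1) * t)) := by
  have hzpow : (2 : ℂ) ^ (-((k : ℤ) + 1)) = ((2 : ℂ) ^ (k + 1))⁻¹ := by
    rw [zpow_neg]; norm_cast
  rw [weierstrassTerm, hzpow]
  push_cast
  ring_nf

theorem norm_weierstrassTerm (k : ℕ) (t : ℝ) : ‖weierstrassTerm k t‖ = (1 / 2 : ℝ) ^ (k + 1) := by
  rw [weierstrassTerm_eq_inv_mul_exp, norm_mul, norm_exp_I_mul_ofReal, norm_inv, norm_pow,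
    one_div, inv_pow]
  norm_num

theorem summable_weierstrassTerm (t : ℝ) : Summable fun k => weierstrassTerm k t :=
  Summable.of_norm <| by
    simpa only [norm_weierstrassTerm] using (summable_nat_add_iff 1).mpr summable_geometric_two

theorem norm_weierstrassTerm_sub_le (k : ℕ) (s t : ℝ) :
    ‖weierstrassTerm k s - weierstrassTerm k t‖ ≤ min ((1 / 2 : ℝ) ^ k) |s - t| := by
  have hpow : (1 / 2 : ℝ) ^ (k + 1) * 2 ^ (k + 1) = 1 := by rw [← mul_pow]; norm_num
  calc ‖weierstrassTerm k s - weierstrassTerm k t‖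
      = (1 / 2 : ℝ) ^ (k + 1) * ‖exp (I * ↑((2 : ℝ) ^ (k + 1) * s))
          - exp (I * ↑((2 : ℝ) ^ (k + 1) * t))‖ := by
        rw [weierstrassTerm_eq_inv_mul_exp, weierstrassTerm_eq_inv_mul_exp, ← mul_sub, norm_mul,
          norm_inv, norm_pow, one_div, inv_pow]
        norm_num
    _ ≤ (1 / 2 : ℝ) ^ (k + 1) * min 2 |2 ^ (k + 1) * s - 2 ^ (k + 1) * t| := by
        gcongr
        exact norm_exp_I_mul_ofReal_sub_exp_I_mul_ofReal_le _ _
    _ = min ((1 / 2 : ℝ) ^ k) |s - t| := by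
        rw [mul_min_of_nonneg _ _ (by positivity), ← mul_sub, abs_mul, abs_of_pos (by positivity),
          ← mul_assoc, hpow, one_mul, pow_succ, mul_assoc]
        norm_num

theorem norm_weierstrassU_sub_le (s t : ℝ) :
    ‖weierstrassU s - weierstrassU t‖ ≤ ∑' k : ℕ, min ((1 / 2 : ℝ) ^ k) |s - t| := by
  have hsum : Summable fun k : ℕ => min ((1 / 2 : ℝ) ^ k) |s - t| :=
    summable_geometric_two.of_nonneg_of_le (fun k => by positivity) fun k => min_le_left _ _
  change ‖∑' k, weierstrassTerm k s - ∑' k, weierstrassTerm k t‖ ≤ _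
  rw [← (summable_weierstrassTerm s).tsum_sub (summable_weierstrassTerm t)]
  exact tsum_of_norm_bounded hsum.hasSum fun k => norm_weierstrassTerm_sub_le k s t

/-- `ω(h) = h log(1/h)` is a modulus of continuity for the Weierstrass lacunary series. -/
theorem weierstrass_modulus_of_continuity :
    ∃ C > (0 : ℝ), ∃ h₀ ∈ Set.Ioo (0 : ℝ) 1, ∀ t : ℝ, ∀ h : ℝ, 0 < h → h < h₀ →
      ‖weierstrassU (t + h) - weierstrassU t‖ ≤ C * h * Real.log (1 / h) := by
  have hlog2 : 0 < Real.log 2 := Real.log_pos one_lt_two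
  refine ⟨4 / Real.log 2, by positivity, 1 / 2, ⟨by norm_num, by norm_num⟩, fun t h h0 hlt => ?_⟩
  obtain ⟨N, hhalfN, hN⟩ := exists_half_pow_le_and_le_logb h0 (by linarith)
  have hlogb : 1 ≤ Real.logb 2 (1 / h) := by
    rw [Real.le_logb_iff_rpow_le one_lt_two (by positivity), Real.rpow_one, le_div_iff₀ h0]
    linarith
  calc ‖weierstrassU (t + h) - weierstrassU t‖
      ≤ ∑' k : ℕ, min ((1 / 2 : ℝ) ^ k) h := by
        simpa [abs_of_pos h0] using norm_weierstrassU_sub_le (t + h) t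
    _ ≤ N * h + 2 * (1 / 2) ^ N := tsum_min_half_pow_le h0.le N
    _ ≤ 4 * h * Real.logb 2 (1 / h) := by nlinarith
    _ = 4 / Real.log 2 * h * Real.log (1 / h) := by rw [Real.logb]; ring
end

section
/- Suppose f(t) = Σ_{k=1}^∞ e^{i 2^k t} defines an L¹ function on the circle ℝ/2πℤ, in the sense that there exists g ∈ L¹(ℝ/2πℤ) whose Fourier coefficients are ĝ(n) = 1 if n = 2^k for some k ≥ 1 and ĝ(n) = 0 otherwise. Then, assuming the Littlewood lower bound ∫₀^{2π}|Σ_{k=1}^m e^{i 2^k t}| dt ≥ c·log m for some c > 0 and all m ≥ 2, a contradiction follows; hence no such L¹ function g exists. -/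
/-!
Let `K_M(u) = |∑_{p<M} e^{ipu}|² = ∑_{|n|<M} (M - |n|) e^{inu}`. Convolution with `K_M` multiplies
the `n`-th Fourier coefficient by `(M - |n|)₊`, and since `K_M ≥ 0` has mean `M` it has norm at
most `M` on `L¹`. For `N = 2^m`, the coefficients `(2N - 2^k)₊ - (N - 2^k)₊` equal `N` for
`k ≤ m` and vanish for `k > m`, so `(K_{2N} * g - K_N * g) / N` is exactly the partial sum
`∑_{k=1}^m e^{i 2^k t}`. Its `L¹` norm is therefore at most `3 ‖g‖₁` for every `m`, which is
incompatible with Littlewood's `c log m` lower bound.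
-/

open scoped Real
open MeasureTheory Classical Complex Finset Filter

noncomputable section

def fourierExp (n : ℤ) (t : ℝ) : ℂ := exp (I * n * t)

lemma continuous_fourierExp (n : ℤ) : Continuous (fourierExp n) := by
  unfold fourierExp; fun_prop

lemma fourierExp_sub (n : ℤ) (t s : ℝ) :
    fourierExp n (t - s) = fourierExp n t * fourierExp (-n) s := by
  simp only [fourierExp, ← exp_add]
  push_cast; ring_nf

lemma integral_fourierExp (n : ℤ) :
    ∫ t in (0 : ℝ)..2 * π, fourierExp n t = if n = 0 then 2 * (π : ℂ) else 0 := by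
  split_ifs with hn
  · simp [fourierExp, hn]
  · have hc : I * n ≠ 0 := mul_ne_zero I_ne_zero (Int.cast_ne_zero.mpr hn)
    have hperiod : exp (I * n * (2 * π)) = 1 := by
      rw [← exp_int_mul_two_pi_mul_I n]; ring_nf
    simp [fourierExp, integral_exp_mul_complex hc, hperiod]

def circleCoeff (h : ℝ → ℂ) (n : ℤ) : ℂ :=
  (1 / (2 * π)) * ∫ t in (0 : ℝ)..2 * π, h t * fourierExp (-n) t

def circleConv (K h : ℝ → ℂ) (t : ℝ) : ℂ :=
  (1 / (2 * π)) * ∫ s in (0 : ℝ)..2 * π, K (t - s) * h s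

lemma circleConv_sum_fourierExp {ι : Type*} (s : Finset ι) (n : ι → ℤ) {h : ℝ → ℂ}
    (hh : IntervalIntegrable h volume 0 (2 * π)) (t : ℝ) :
    circleConv (fun u => ∑ i ∈ s, fourierExp (n i) u) h t
      = ∑ i ∈ s, circleCoeff h (n i) * fourierExp (n i) t := by
  have hint (i : ι) : IntervalIntegrable (fun u => fourierExp (n i) t * (h u * fourierExp (-n i) u))
      volume 0 (2 * π) :=
    (hh.mul_continuousOn (continuous_fourierExp _).continuousOn).const_mul _
  have hexpand (u : ℝ) : (∑ i ∈ s, fourierExp (n i) (t - u)) * h u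
      = ∑ i ∈ s, fourierExp (n i) t * (h u * fourierExp (-n i) u) := by
    simp only [sum_mul, fourierExp_sub]
    exact sum_congr rfl fun i _ => by ring
  simp only [circleConv, circleCoeff, hexpand]
  rw [intervalIntegral.integral_finsetSum fun i _ => hint i, mul_sum]
  refine sum_congr rfl fun i _ => ?_
  rw [intervalIntegral.integral_const_mul]
  ring

lemma integral_sum_fourierExp {ι : Type*} (s : Finset ι) (n : ι → ℤ) (c : ι → ℂ) :
    ∫ t in (0 : ℝ)..2 * π, ∑ i ∈ s, c i * fourierExp (n i) t
      = 2 * π * ∑ i ∈ s with n i = 0, c i := by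
  rw [intervalIntegral.integral_finsetSum fun i _ =>
      ((continuous_fourierExp _).const_mul _).intervalIntegrable _ _,
    mul_sum, sum_filter]
  refine sum_congr rfl fun i _ => ?_
  rw [intervalIntegral.integral_const_mul, integral_fourierExp]
  split_ifs <;> ring

lemma norm_circleConv_le {K : ℝ → ℝ} (hK : ∀ u, 0 ≤ K u) (h : ℝ → ℂ) (t : ℝ) :
    ‖circleConv (fun u => K u) h t‖ ≤ (circleConv (fun u => K u) (fun s => ‖h s‖) t).re := by
  have hreal : circleConv (fun u => K u) (fun s => ‖h s‖) t
      = ((1 / (2 * π) * ∫ s in (0 : ℝ)..2 * π, K (t - s) * ‖h s‖ : ℝ) : ℂ) := by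
    simp only [circleConv, ← ofReal_mul, intervalIntegral.integral_ofReal]
    push_cast; ring
  rw [hreal, ofReal_re, circleConv, norm_mul]
  have hπ : ‖(1 / (2 * π) : ℂ)‖ = 1 / (2 * π) := by simp [abs_of_pos Real.pi_pos]
  rw [hπ]
  gcongr
  refine (intervalIntegral.norm_integral_le_integral_norm Real.two_pi_pos.le).trans_eq ?_
  simp [abs_of_nonneg (hK _)]

/-- `M` times the Fejér kernel of order `M`. -/
def fejerKernel (M : ℕ) (u : ℝ) : ℝ := ‖∑ p ∈ range M, fourierExp p u‖ ^ 2

lemma fejerKernel_nonneg (M : ℕ) (u : ℝ) : 0 ≤ fejerKernel M u := sq_nonneg _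

lemma ofReal_fejerKernel (M : ℕ) (u : ℝ) :
    (fejerKernel M u : ℂ) = ∑ pq ∈ range M ×ˢ range M, fourierExp ((pq.1 : ℤ) - pq.2) u := by
  rw [fejerKernel, ofReal_pow, ← mul_conj', map_sum, sum_mul_sum, sum_product]
  refine sum_congr rfl fun p _ => sum_congr rfl fun q _ => ?_
  rw [sub_eq_add_neg, fourierExp, fourierExp, fourierExp, ← exp_conj, ← exp_add]
  congr 1
  simp only [map_mul, conj_I, conj_ofReal, map_intCast]
  push_cast; ring

lemma circleConv_fejerKernel (M : ℕ) {h : ℝ → ℂ} (hh : IntervalIntegrable h volume 0 (2 * π))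
    (t : ℝ) :
    circleConv (fun u => fejerKernel M u) h t
      = ∑ pq ∈ range M ×ˢ range M,
          circleCoeff h ((pq.1 : ℤ) - pq.2) * fourierExp ((pq.1 : ℤ) - pq.2) t := by
  simp only [ofReal_fejerKernel]
  exact circleConv_sum_fourierExp _ _ hh t

lemma integral_circleConv_fejerKernel (M : ℕ) {h : ℝ → ℂ}
    (hh : IntervalIntegrable h volume 0 (2 * π)) :
    ∫ t in (0 : ℝ)..2 * π, circleConv (fun u => fejerKernel M u) h t
      = M * ∫ t in (0 : ℝ)..2 * π, h t := by
  have hdiag : (range M ×ˢ range M).filter (fun pq : ℕ × ℕ => (pq.1 : ℤ) - pq.2 = 0)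
      = (range M).diag := by
    ext ⟨p, q⟩; simp only [mem_filter, mem_product, mem_diag, mem_range]; omega
  have hcoeff_zero : circleCoeff h 0 = 1 / (2 * π) * ∫ t in (0 : ℝ)..2 * π, h t := by
    simp [circleCoeff, fourierExp]
  rw [intervalIntegral.integral_congr fun t _ => circleConv_fejerKernel M hh t,
    integral_sum_fourierExp, hdiag,
    sum_congr rfl fun pq hpq => by rw [(mem_diag.mp hpq).2, sub_self],
    sum_const, diag_card, card_range, nsmul_eq_mul, hcoeff_zero]
  field_simp

lemma continuous_circleConv_fejerKernel (M : ℕ) {h : ℝ → ℂ}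
    (hh : IntervalIntegrable h volume 0 (2 * π)) :
    Continuous (circleConv (fun u => fejerKernel M u) h) := by
  rw [funext (circleConv_fejerKernel M hh)]
  exact continuous_finsetSum _ fun _ _ => continuous_const.mul (continuous_fourierExp _)

lemma integral_norm_circleConv_fejerKernel_le (M : ℕ) {h : ℝ → ℂ}
    (hh : IntervalIntegrable h volume 0 (2 * π)) :
    ∫ t in (0 : ℝ)..2 * π, ‖circleConv (fun u => fejerKernel M u) h t‖
      ≤ M * ∫ t in (0 : ℝ)..2 * π, ‖h t‖ := by
  have hnorm : IntervalIntegrable (fun s => (‖h s‖ : ℂ)) volume 0 (2 * π) :=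
    ⟨hh.norm.1.ofReal, hh.norm.2.ofReal⟩
  have hmajorant := continuous_circleConv_fejerKernel M hnorm
  calc ∫ t in (0 : ℝ)..2 * π, ‖circleConv (fun u => fejerKernel M u) h t‖
      ≤ ∫ t in (0 : ℝ)..2 * π, (circleConv (fun u => fejerKernel M u) (fun s => ‖h s‖) t).re :=
        intervalIntegral.integral_mono_on Real.two_pi_pos.le
          ((continuous_circleConv_fejerKernel M hh).norm.intervalIntegrable _ _)
          ((continuous_re.comp hmajorant).intervalIntegrable _ _)
          fun t _ => norm_circleConv_le (fejerKernel_nonneg M) h t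
    _ = M * ∫ t in (0 : ℝ)..2 * π, ‖h t‖ := by
        simp only [← RCLike.re_to_complex]
        rw [intervalIntegral.intervalIntegral_re (hmajorant.intervalIntegrable _ _),
          integral_circleConv_fejerKernel M hnorm, intervalIntegral.integral_ofReal]
        simp

lemma sum_product_range_ite_sub_eq (M d : ℕ) :
    ∑ pq ∈ range M ×ˢ range M, (if (pq.1 : ℤ) - pq.2 = d then 1 else 0 : ℂ) = (M - d : ℕ) := by
  have hrow (q : ℕ) : ∑ p ∈ range M, (if (p : ℤ) - q = d then 1 else 0 : ℂ)
      = if q + d < M then 1 else 0 := by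
    simp only [sub_eq_iff_eq_add, ← Nat.cast_add, Nat.cast_inj, sum_ite_eq', mem_range,
      add_comm d]
  have hcols : (range M).filter (fun q => q + d < M) = range (M - d) := by
    ext q; simp only [mem_filter, mem_range]; omega
  rw [sum_product_right, sum_congr rfl fun q _ => hrow q, sum_boole, hcols, card_range]

lemma ite_exists_pow_eq_sum_Icc {m : ℕ} {n : ℤ} (hn : n < 2 ^ (m + 1)) :
    (if ∃ k : ℕ, 1 ≤ k ∧ n = 2 ^ k then 1 else 0 : ℂ)
      = ∑ k ∈ Icc 1 m, if n = 2 ^ k then 1 else 0 := by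
  split_ifs with h
  · obtain ⟨k, hk, rfl⟩ := h
    have hkm : k ≤ m := Nat.lt_succ_iff.mp ((pow_lt_pow_iff_right₀ one_lt_two).mp hn)
    simp only [pow_right_inj₀ two_pos (by norm_num : (2 : ℤ) ≠ 1), sum_ite_eq, mem_Icc]
    exact (if_pos ⟨hk, hkm⟩).symm
  · refine (sum_eq_zero fun k hk => ?_).symm
    exact if_neg fun hnk => h ⟨k, (mem_Icc.mp hk).1, hnk⟩

lemma sum_product_range_lacunary_mul_fourierExp {m M : ℕ} (hM : M ≤ 2 ^ (m + 1)) (t : ℝ) :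
    ∑ pq ∈ range M ×ˢ range M,
        (if ∃ k : ℕ, 1 ≤ k ∧ (pq.1 : ℤ) - pq.2 = 2 ^ k then 1 else 0 : ℂ)
          * fourierExp ((pq.1 : ℤ) - pq.2) t
      = ∑ k ∈ Icc 1 m, ((M - 2 ^ k : ℕ) : ℂ) * fourierExp (2 ^ k) t := by
  have hdiff {pq : ℕ × ℕ} (hpq : pq ∈ range M ×ˢ range M) : (pq.1 : ℤ) - pq.2 < 2 ^ (m + 1) := by
    have := (mem_range.mp (mem_product.mp hpq).1).trans_le hM
    zify at this; omega
  calc _ = ∑ pq ∈ range M ×ˢ range M, ∑ k ∈ Icc 1 m,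
          (if (pq.1 : ℤ) - pq.2 = 2 ^ k then 1 else 0 : ℂ) * fourierExp (2 ^ k) t := by
        refine sum_congr rfl fun pq hpq => ?_
        rw [ite_exists_pow_eq_sum_Icc (hdiff hpq), sum_mul]
        refine sum_congr rfl fun k _ => ?_
        split_ifs with h <;> simp [h]
    _ = ∑ k ∈ Icc 1 m, ((M - 2 ^ k : ℕ) : ℂ) * fourierExp (2 ^ k) t := by
        rw [sum_comm]
        refine sum_congr rfl fun k _ => ?_
        rw [← sum_mul, ← sum_product_range_ite_sub_eq]
        push_cast; rfl

lemma sum_fourierExp_two_pow_eq {g : ℝ → ℂ} (hg : IntervalIntegrable g volume 0 (2 * π))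
    (hcoeff : ∀ n : ℤ, circleCoeff g n = if ∃ k : ℕ, 1 ≤ k ∧ n = 2 ^ k then 1 else 0)
    (m : ℕ) (t : ℝ) :
    ∑ k ∈ Icc 1 m, fourierExp (2 ^ k) t
      = (1 / 2 ^ m) * (circleConv (fun u => fejerKernel (2 ^ (m + 1)) u) g t
          - circleConv (fun u => fejerKernel (2 ^ m) u) g t) := by
  have hm : 2 ^ m ≤ 2 ^ (m + 1) := pow_le_pow_right₀ one_le_two (m.le_add_right 1)
  simp only [circleConv_fejerKernel _ hg, hcoeff]
  rw [sum_product_range_lacunary_mul_fourierExp le_rfl,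
    sum_product_range_lacunary_mul_fourierExp hm, ← sum_sub_distrib, mul_sum]
  refine sum_congr rfl fun k hk => ?_
  have hkm : 2 ^ k ≤ 2 ^ m := pow_le_pow_right₀ one_le_two (mem_Icc.mp hk).2
  rw [Nat.cast_sub hkm, Nat.cast_sub (hkm.trans hm)]
  field_simp
  push_cast
  ring

lemma integral_norm_sum_fourierExp_two_pow_le {g : ℝ → ℂ}
    (hg : IntervalIntegrable g volume 0 (2 * π))
    (hcoeff : ∀ n : ℤ, circleCoeff g n = if ∃ k : ℕ, 1 ≤ k ∧ n = 2 ^ k then 1 else 0) (m : ℕ) :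
    ∫ t in (0 : ℝ)..2 * π, ‖∑ k ∈ Icc 1 m, fourierExp (2 ^ k) t‖
      ≤ 3 * ∫ t in (0 : ℝ)..2 * π, ‖g t‖ := by
  set A := circleConv (fun u => fejerKernel (2 ^ (m + 1)) u) g
  set B := circleConv (fun u => fejerKernel (2 ^ m) u) g
  have hA : IntervalIntegrable (fun t => ‖A t‖) volume 0 (2 * π) :=
    (continuous_circleConv_fejerKernel _ hg).norm.intervalIntegrable _ _
  have hB : IntervalIntegrable (fun t => ‖B t‖) volume 0 (2 * π) :=
    (continuous_circleConv_fejerKernel _ hg).norm.intervalIntegrable _ _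
  have hpointwise (t : ℝ) :
      ‖∑ k ∈ Icc 1 m, fourierExp (2 ^ k) t‖ ≤ (1 / 2 ^ m) * (‖A t‖ + ‖B t‖) := by
    rw [sum_fourierExp_two_pow_eq hg hcoeff, norm_mul]
    gcongr
    · simp
    · exact norm_sub_le _ _
  calc _ ≤ ∫ t in (0 : ℝ)..2 * π, (1 / 2 ^ m) * (‖A t‖ + ‖B t‖) :=
        intervalIntegral.integral_mono_on Real.two_pi_pos.le
          ((continuous_finsetSum _ fun k _ => continuous_fourierExp _).norm.intervalIntegrable _ _)
          ((hA.add hB).const_mul _) fun t _ => hpointwise t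
    _ = (1 / 2 ^ m) * ((∫ t in (0 : ℝ)..2 * π, ‖A t‖) + ∫ t in (0 : ℝ)..2 * π, ‖B t‖) := by
        rw [intervalIntegral.integral_const_mul, intervalIntegral.integral_add hA hB]
    _ ≤ (1 / 2 ^ m) * (2 ^ (m + 1) * (∫ t in (0 : ℝ)..2 * π, ‖g t‖)
          + 2 ^ m * ∫ t in (0 : ℝ)..2 * π, ‖g t‖) := by
        gcongr
        · exact_mod_cast integral_norm_circleConv_fejerKernel_le _ hg
        · exact_mod_cast integral_norm_circleConv_fejerKernel_le _ hg
    _ = 3 * ∫ t in (0 : ℝ)..2 * π, ‖g t‖ := by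
        field_simp
        ring

end

theorem no_L1_function_with_lacunary_fourier_coefficients_general
    (g : ℝ → ℂ)
    (hint : IntervalIntegrable g volume 0 (2 * π))
    (hfourier : ∀ n : ℤ,
      (1 / (2 * (π : ℂ))) * ∫ t in (0 : ℝ)..(2 * π), g t * Complex.exp (-Complex.I * (n : ℂ) * (t : ℂ))
        = if ∃ k : ℕ, 1 ≤ k ∧ n = 2 ^ k then 1 else 0)
    (hlittlewood : ∃ c > (0 : ℝ), ∀ m : ℕ, 2 ≤ m →
      c * Real.log m ≤
        ∫ t in (0 : ℝ)..(2 * π), ‖∑ k ∈ Finset.Icc 1 m, Complex.exp (Complex.I * 2 ^ k * (t : ℂ))‖) :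
    False := by
  obtain ⟨c, hc, hlower⟩ := hlittlewood
  have hcoeff (n : ℤ) : circleCoeff g n = if ∃ k : ℕ, 1 ≤ k ∧ n = 2 ^ k then 1 else 0 := by
    rw [← hfourier n, circleCoeff]
    simp only [fourierExp, Int.cast_neg, mul_neg, neg_mul]
  have hupper (m : ℕ) :
      ∫ t in (0 : ℝ)..(2 * π), ‖∑ k ∈ Finset.Icc 1 m, Complex.exp (Complex.I * 2 ^ k * (t : ℂ))‖
        ≤ 3 * ∫ t in (0 : ℝ)..2 * π, ‖g t‖ := by
    simpa [fourierExp] using integral_norm_sum_fourierExp_two_pow_le hint hcoeff m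
  have hlog : Tendsto (fun m : ℕ => c * Real.log m) atTop atTop :=
    (Real.tendsto_log_atTop.comp tendsto_natCast_atTop_atTop).const_mul_atTop hc
  obtain ⟨m, hm, hlarge⟩ := ((eventually_ge_atTop 2).and
    (hlog.eventually_gt_atTop (3 * ∫ t in (0 : ℝ)..2 * π, ‖g t‖))).exists
  linarith [hlower m hm, hupper m]

/-- There is no `L¹` function on the circle `ℝ/2πℤ` whose Fourier coefficients are `1`
exactly at the lacunary frequencies `2^k`, `k ≥ 1`, and `0` otherwise — granted the
Littlewood lower bound `∫₀^{2π} |∑_{k=1}^m e^{i 2^k t}| dt ≥ c log m`. -/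
theorem no_L1_function_with_lacunary_fourier_coefficients
    (g : ℝ → ℂ) (hper : Function.Periodic g (2 * π)) (hmeas : Measurable g)
    (hint : IntervalIntegrable g volume 0 (2 * π))
    (hfourier : ∀ n : ℤ,
      (1 / (2 * (π : ℂ))) * ∫ t in (0 : ℝ)..(2 * π), g t * Complex.exp (-Complex.I * (n : ℂ) * (t : ℂ))
        = if ∃ k : ℕ, 1 ≤ k ∧ n = 2 ^ k then 1 else 0)
    (hlittlewood : ∃ c > (0 : ℝ), ∀ m : ℕ, 2 ≤ m →
      c * Real.log m ≤
        ∫ t in (0 : ℝ)..(2 * π), ‖∑ k ∈ Finset.Icc 1 m, Complex.exp (Complex.I * 2 ^ k * (t : ℂ))‖) :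
    False :=
  no_L1_function_with_lacunary_fourier_coefficients_general g hint hfourier hlittlewood
end

section
/- Let A: L^∞(X, μ) → L^∞(X, μ) be a bounded linear operator on the bounded measurable functions over a probability space that is a ring homomorphism with unit (A(fg) = A(f)A(g) pointwise a.e. and A(1) = 1), and suppose A is represented by a measurable family of finite measures K(x, ·) via A f(x) = ∫ f(y) K(x, dy) for a.e. x. Then for a.e. x, K(x, ·) is a Dirac measure: there exists a measurable map Φ: X → X with A f(x) = f(Φ(x)) for a.e. x, for every f ∈ L^∞. -/
/-!
Test the kernel against a bounded measurable injection `g : X → ℝ`, which exists because `X` is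
standard Borel. Multiplicativity says that `g` has variance zero under `K x`, so `g` is
`K x`-a.e. equal to its mean; by injectivity `K x` is then the Dirac mass at the unique point
where `g` takes that value. That point depends measurably on `x`, being a measurable left
inverse of `g` applied to the measurable function `x ↦ ∫ g d(K x)`.
-/

open MeasureTheory ProbabilityTheory

theorem exists_bounded_measurableEmbedding_real (X : Type*) [MeasurableSpace X]
    [StandardBorelSpace X] : ∃ g : X → ℝ, MeasurableEmbedding g ∧ ∃ C, ∀ y, |g y| ≤ C := by
  obtain ⟨e, he⟩ := exists_measurableEmbedding_real X
  refine ⟨Real.arctan ∘ e, ?_, Real.pi / 2, fun y => ?_⟩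
  · exact (Real.measurable_arctan.comp he.measurable).measurableEmbedding
      (Real.arctan_injective.comp he.injective)
  · exact abs_le.mpr ⟨(Real.neg_pi_div_two_lt_arctan _).le, (Real.arctan_lt_pi_div_two _).le⟩

theorem ae_eq_integral_of_integral_sq_eq_sq {Ω : Type*} [MeasurableSpace Ω] {ν : Measure Ω}
    [IsProbabilityMeasure ν] {f : Ω → ℝ} (hf : MemLp f 2 ν)
    (h : ∫ y, f y ^ 2 ∂ν = (∫ y, f y ∂ν) ^ 2) : f =ᵐ[ν] fun _ => ∫ y, f y ∂ν := by
  have hvar : variance f ν = 0 := by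
    rw [variance_eq_sub hf]
    exact sub_eq_zero.mpr h
  rw [← evariance_eq_zero_iff hf.aemeasurable, ← ofReal_variance hf, hvar, ENNReal.ofReal_zero]

theorem exists_eq_dirac_of_ae_eq_const {X Y : Type*} [MeasurableSpace X]
    {ν : Measure X} [IsProbabilityMeasure ν] {g : X → Y} (hg : Function.Injective g) {c : Y}
    (h : ∀ᵐ y ∂ν, g y = c) : ∃ y₀, g y₀ = c ∧ ν = Measure.dirac y₀ := by
  obtain ⟨y₀, hy₀⟩ := h.exists
  have hid : (id : X → X) =ᵐ[ν] fun _ => y₀ := h.mono fun y hy => hg (hy.trans hy₀.symm)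
  refine ⟨y₀, hy₀, ?_⟩
  simpa using (hasLaw_dirac_of_ae_eq hid).map_eq

/-- A multiplicative unital operator on `L^∞` represented by a measurable family of
probability measures `K(x, ·)` is a measurable change of variables: the kernel is a.e.
a Dirac measure `δ_{Φ(x)}`, so `A f(x) = ∫ f dK(x,·) = f(Φ(x))` a.e. for every bounded
measurable `f`. -/
theorem multiplicative_kernel_is_dirac
    {X : Type*} [MeasurableSpace X] [StandardBorelSpace X] [Nonempty X]
    (μ : Measure X) [IsProbabilityMeasure μ]
    (K : X → Measure X) (hK : Measurable K)
    (hprob : ∀ᵐ x ∂μ, IsProbabilityMeasure (K x))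
    (hmult : ∀ f : X → ℝ, Measurable f → (∃ C, ∀ y, |f y| ≤ C) →
      ∀ᵐ x ∂μ, ∫ y, (f y) ^ 2 ∂(K x) = (∫ y, f y ∂(K x)) ^ 2) :
    ∃ Φ : X → X, Measurable Φ ∧ (∀ᵐ x ∂μ, K x = Measure.dirac (Φ x)) ∧
      ∀ f : X → ℝ, Measurable f → (∃ C, ∀ y, |f y| ≤ C) →
        ∀ᵐ x ∂μ, ∫ y, f y ∂(K x) = f (Φ x) := by
  obtain ⟨g, hg, C, hC⟩ := exists_bounded_measurableEmbedding_real X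
  obtain ⟨r, hr, hrg⟩ := hg.exists_measurable_extend measurable_id fun _ => ‹Nonempty X›
  have hmean : Measurable fun x => ∫ y, g y ∂K x :=
    (hg.measurable.stronglyMeasurable.integral_kernel (κ := ⟨K, hK⟩)).measurable
  have hdirac : ∀ᵐ x ∂μ, K x = Measure.dirac (r (∫ y, g y ∂K x)) := by
    filter_upwards [hprob, hmult g hg.measurable ⟨C, hC⟩] with x _ hsq
    have hg2 : MemLp g 2 (K x) :=
      .of_bound hg.measurable.aestronglyMeasurable C (.of_forall hC)
    obtain ⟨y₀, hy₀, hKx⟩ :=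
      exists_eq_dirac_of_ae_eq_const hg.injective (ae_eq_integral_of_integral_sq_eq_sq hg2 hsq)
    rwa [← hy₀, show r (g y₀) = y₀ from congrFun hrg y₀]
  refine ⟨fun x => r (∫ y, g y ∂K x), hr.comp hmean, hdirac, fun f _ _ => ?_⟩
  filter_upwards [hdirac] with x hx
  generalize r (∫ y, g y ∂K x) = z at hx ⊢
  rw [hx, integral_dirac]
end
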